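/- arXiv:math/0002130 — 7 statements merged into one kernel-verified Lean document; each statement's English description precedes it below -/
import Mathlib

section
/- Given strong deformation retract data (F, G, H) between chain complexes (M, d_M) and (N, d_N), i.e. F d_M = d_N F, G d_N = d_M G, GF - 1_M = d_M H + H d_M, FG = 1_N, and given a perturbation ∂_M such that the operator A := ∂_M(1 + H∂_M)^{-1} = ∑_{k≥0} ∂_M(H∂_M)^k is well-defined (e.g. H∂_M is nilpotent), the perturbed differential d̃_N := d_N + F·A·G satisfies d̃_N² = 0. -/
/-- **Basic Perturbation Lemma, part 1.** Given SDR data `(F, G, H)` between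
chain complexes `(M, dM)` and `(N, dN)` satisfying the side conditions, and a
perturbation `pM` of `dM` such that `H ∘ pM` is nilpotent, the operator
`A := ∑_{k≥0} pM (H pM)^k` is a finite sum and the perturbed differential
`dN + F ∘ A ∘ G` squares to zero. -/
theorem ideal_perturbation_stmt0
    {M N : Type*} [AddCommGroup M] [AddCommGroup N] [Module ℤ M] [Module ℤ N]
    (dM H pM A : M →ₗ[ℤ] M) (dN : N →ₗ[ℤ] N)
    (F : M →ₗ[ℤ] N) (G : N →ₗ[ℤ] M)
    (hdM : dM ∘ₗ dM = 0) (hdN : dN ∘ₗ dN = 0)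
    (hF : F ∘ₗ dM = dN ∘ₗ F) (hG : G ∘ₗ dN = dM ∘ₗ G)
    (hH : G ∘ₗ F - LinearMap.id = dM ∘ₗ H + H ∘ₗ dM)
    (hFG : F ∘ₗ G = LinearMap.id)
    (hHH : H ∘ₗ H = 0) (hHG : H ∘ₗ G = 0) (hFH : F ∘ₗ H = 0)
    (hpert : (dM + pM) ∘ₗ (dM + pM) = 0)
    (n : ℕ) (hnil : (H ∘ₗ pM) ^ n = 0)
    (hA : A = ∑ k ∈ Finset.range n, pM ∘ₗ (H ∘ₗ pM) ^ k) :
    (dN + F ∘ₗ A ∘ₗ G) ∘ₗ (dN + F ∘ₗ A ∘ₗ G) = 0 := by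
  classical
  -- Work in the endomorphism ring of `M`; `∘ₗ = *` there.
  set x : M →ₗ[ℤ] M := H * pM with hxdef
  set y : M →ₗ[ℤ] M := pM * H with hydef
  set b : M →ₗ[ℤ] M := ∑ k ∈ Finset.range n, x ^ k with hbdef
  set b' : M →ₗ[ℤ] M := ∑ k ∈ Finset.range (n + 1), y ^ k with hb'def
  have hxn : x ^ n = 0 := hnil
  have hsc : ∀ k : ℕ, pM * x ^ k = y ^ k * pM := by
    intro k
    have h0 : SemiconjBy pM x y := by
      show pM * (H * pM) = (pM * H) * pM
      rw [mul_assoc]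
    exact (h0.pow_right k).eq
  have hyn : y ^ (n + 1) = 0 := by
    calc y ^ (n + 1) = y ^ n * (pM * H) := by rw [pow_succ]
      _ = (y ^ n * pM) * H := by rw [mul_assoc]
      _ = (pM * x ^ n) * H := by rw [← hsc]
      _ = 0 := by rw [hxn, mul_zero, zero_mul]
  have hA' : A = pM * b := by
    rw [hA, hbdef, Finset.mul_sum]
    rfl
  have hcomm : pM * b = b' * pM := by
    rw [hbdef, hb'def, Finset.mul_sum, Finset.sum_mul, Finset.sum_range_succ]
    have h1 : y ^ n * pM = 0 := by rw [← hsc, hxn, mul_zero]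
    rw [h1, add_zero]
    exact Finset.sum_congr rfl fun k _ => hsc k
  have hxb : x * b = b - 1 := by
    have hc : Commute x b := Commute.sum_right _ _ _ fun k _ => (Commute.refl x).pow_right k
    have h1 : b * (x - 1) = x ^ n - 1 := geom_sum_mul x n
    have h2 : x * b - b = -1 := by
      rw [hc.eq]
      calc b * x - b = b * (x - 1) := by noncomm_ring
        _ = -1 := by rw [h1, hxn, zero_sub]
    rw [sub_eq_iff_eq_add] at h2
    rw [h2]; noncomm_ring
  have hb'y : b' * y = b' - 1 := by
    have h1 : b' * (y - 1) = y ^ (n + 1) - 1 := geom_sum_mul y (n + 1)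
    have h2 : b' * y - b' = -1 := by
      calc b' * y - b' = b' * (y - 1) := by noncomm_ring
        _ = -1 := by rw [h1, hyn, zero_sub]
    rw [sub_eq_iff_eq_add] at h2
    rw [h2]; noncomm_ring
  have fHA : H * A = b - 1 := by
    rw [hA', ← mul_assoc]
    exact hxb
  have fAH : A * H = b' - 1 := by
    rw [hA', hcomm, mul_assoc]
    exact hb'y
  have hrel : dM * pM + pM * dM + pM * pM = 0 := by
    have h0 : dM * dM = 0 := hdM
    have h1 : (dM + pM) * (dM + pM) = 0 := hpert
    have h2 : dM * dM + (dM * pM + pM * dM + pM * pM) = 0 := by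
      rw [← h1]; noncomm_ring
    rw [h0, zero_add] at h2
    exact h2
  have key : dM * A + A * dM + A * ((1 + (dM * H + H * dM)) * A) = 0 := by
    calc dM * A + A * dM + A * ((1 + (dM * H + H * dM)) * A)
        = dM * A + A * dM + A * A + (A * H) * (dM * A) + (A * dM) * (H * A) := by
          noncomm_ring
      _ = dM * A + A * dM + A * A + (b' - 1) * (dM * A) + (A * dM) * (b - 1) := by
          rw [fAH, fHA]
      _ = A * A + b' * (dM * A) + (A * dM) * b := by noncomm_ring
      _ = (b' * pM) * (pM * b) + b' * (dM * (pM * b)) + ((b' * pM) * dM) * b := by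
          rw [hA', hcomm]
      _ = b' * ((dM * pM + pM * dM + pM * pM) * b) := by noncomm_ring
      _ = 0 := by rw [hrel, zero_mul, mul_zero]
  -- now assemble with F and G
  have hGF : G ∘ₗ F = LinearMap.id + (dM ∘ₗ H + H ∘ₗ dM) := by
    have := hH
    rw [sub_eq_iff_eq_add] at this
    rw [this]; abel
  have key' : dM ∘ₗ A + A ∘ₗ dM + A ∘ₗ ((LinearMap.id + (dM ∘ₗ H + H ∘ₗ dM)) ∘ₗ A) = 0 := key
  calc (dN + F ∘ₗ A ∘ₗ G) ∘ₗ (dN + F ∘ₗ A ∘ₗ G)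
      = dN ∘ₗ dN + ((dN ∘ₗ F) ∘ₗ (A ∘ₗ G) + ((F ∘ₗ (A ∘ₗ (G ∘ₗ dN))) +
          F ∘ₗ (A ∘ₗ ((G ∘ₗ F) ∘ₗ (A ∘ₗ G))))) := by
        simp only [LinearMap.add_comp, LinearMap.comp_add, LinearMap.comp_assoc]
        abel
    _ = F ∘ₗ ((dM ∘ₗ A + A ∘ₗ dM + A ∘ₗ ((LinearMap.id + (dM ∘ₗ H + H ∘ₗ dM)) ∘ₗ A)) ∘ₗ G) := by
        rw [hdN, ← hF, hG, hGF]
        simp only [LinearMap.add_comp, LinearMap.comp_add, LinearMap.comp_assoc, zero_add]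
        abel
    _ = 0 := by rw [key', LinearMap.zero_comp, LinearMap.comp_zero]
end

section
/- Under SDR data with side conditions and a nilpotent perturbation, setting A := ∑_{k≥0} ∂_M(H∂_M)^k, d̃_M := d_M + ∂_M, d̃_N := d_N + FAG, F̃ := F + FAH, G̃ := G + HAG, H̃ := H + HAH, the perturbed maps satisfy F̃ d̃_M = d̃_N F̃ and G̃ d̃_N = d̃_M G̃. -/
/-- Auxiliary ring computation for the Basic Perturbation Lemma. -/
lemma bpl_ring_aux {R : Type*} [Ring R] (d p h a : R)
    (hd : d * d = 0) (hpert : (d + p) * (d + p) = 0)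
    (n : ℕ) (hnil : (h * p) ^ n = 0)
    (ha : a = ∑ k ∈ Finset.range n, p * (h * p) ^ k) :
    a = p + a * (h * p) ∧ a = p + (p * h) * a ∧
      d * a + a * d + a * a + a * (d * h) * a + a * (h * d) * a = 0 := by
  have hsemi : ∀ k : ℕ, p * (h * p) ^ k = (p * h) ^ k * p := by
    intro k
    have : SemiconjBy p (h * p) (p * h) := by unfold SemiconjBy; noncomm_ring
    exact (this.pow_right k).eq
  have ha' : a = (∑ k ∈ Finset.range n, (p * h) ^ k) * p := by
    rw [ha, Finset.sum_mul]
    exact Finset.sum_congr rfl fun k _ => hsemi k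
  have e1 : a * (1 - h * p) = p := by
    rw [ha, ← Finset.mul_sum, mul_assoc, geom_sum_mul_neg, hnil, sub_zero, mul_one]
  have e2 : (1 - p * h) * a = p := by
    rw [ha', ← mul_assoc, mul_neg_geom_sum, sub_mul, one_mul, ← hsemi, hnil,
      mul_zero, sub_zero]
  have ea1 : a = p + a * (h * p) := by
    have := e1; rw [mul_sub, mul_one] at this
    exact sub_eq_iff_eq_add.mp this
  have ea2 : a = p + (p * h) * a := by
    have := e2; rw [sub_mul, one_mul] at this
    exact sub_eq_iff_eq_add.mp this
  refine ⟨ea1, ea2, ?_⟩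
  have hnil' : IsNilpotent (h * p) := ⟨n, hnil⟩
  have hnil'' : IsNilpotent (p * h) := ⟨n + 1, by
    have hs : h * (p * h) ^ n = (h * p) ^ n * h := by
      have : SemiconjBy h (p * h) (h * p) := by unfold SemiconjBy; noncomm_ring
      exact (this.pow_right n).eq
    rw [pow_succ', mul_assoc, hs, hnil, zero_mul, mul_zero]⟩
  have hu : IsUnit (1 - p * h) := hnil''.isUnit_one_sub
  have hv : IsUnit (1 - h * p) := hnil'.isUnit_one_sub
  set X := d * a + a * d + a * a + a * (d * h) * a + a * (h * d) * a with hX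
  have key : (1 - p * h) * (X * (1 - h * p)) = 0 := by
    have expand : (1 - p * h) * (X * (1 - h * p)) =
        (1 - p * h) * d * (a * (1 - h * p)) + ((1 - p * h) * a) * (d * (1 - h * p))
          + ((1 - p * h) * a) * (a * (1 - h * p))
          + ((1 - p * h) * a) * (d * h) * (a * (1 - h * p))
          + ((1 - p * h) * a) * (h * d) * (a * (1 - h * p)) := by
      rw [hX]; noncomm_ring
    rw [expand, e1, e2]
    have h5 : d * p + p * d + p * p = 0 := by
      have : d * p + p * d + p * p = (d + p) * (d + p) - d * d := by noncomm_ring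
      rw [this, hpert, hd, sub_zero]
    linear_combination (norm := noncomm_ring) h5
  have hXv : X * (1 - h * p) = 0 := hu.mul_right_injective (by simpa using key)
  exact hv.mul_left_injective (by simpa using hXv)

/-- **Basic Perturbation Lemma, part 2.** The perturbed maps
`F̃ = F + F∘A∘H` and `G̃ = G + H∘A∘G` are chain maps for the perturbed
differentials `d̃M = dM + pM` and `d̃N = dN + F∘A∘G`. -/
theorem ideal_perturbation_stmt1
    {M N : Type*} [AddCommGroup M] [AddCommGroup N] [Module ℤ M] [Module ℤ N]
    (dM H pM A : M →ₗ[ℤ] M) (dN : N →ₗ[ℤ] N)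
    (F : M →ₗ[ℤ] N) (G : N →ₗ[ℤ] M)
    (hdM : dM ∘ₗ dM = 0) (hdN : dN ∘ₗ dN = 0)
    (hF : F ∘ₗ dM = dN ∘ₗ F) (hG : G ∘ₗ dN = dM ∘ₗ G)
    (hH : G ∘ₗ F - LinearMap.id = dM ∘ₗ H + H ∘ₗ dM)
    (hFG : F ∘ₗ G = LinearMap.id)
    (hHH : H ∘ₗ H = 0) (hHG : H ∘ₗ G = 0) (hFH : F ∘ₗ H = 0)
    (hpert : (dM + pM) ∘ₗ (dM + pM) = 0)
    (n : ℕ) (hnil : (H ∘ₗ pM) ^ n = 0)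
    (hA : A = ∑ k ∈ Finset.range n, pM ∘ₗ (H ∘ₗ pM) ^ k) :
    (F + F ∘ₗ A ∘ₗ H) ∘ₗ (dM + pM) = (dN + F ∘ₗ A ∘ₗ G) ∘ₗ (F + F ∘ₗ A ∘ₗ H) ∧
    (G + H ∘ₗ A ∘ₗ G) ∘ₗ (dN + F ∘ₗ A ∘ₗ G) = (dM + pM) ∘ₗ (G + H ∘ₗ A ∘ₗ G) := by
  -- transfer M-endomorphism hypotheses to the ring `Module.End ℤ M`
  have hdM' : dM * dM = 0 := hdM
  have hpert' : (dM + pM) * (dM + pM) = 0 := hpert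
  have hnil' : (H * pM) ^ n = 0 := hnil
  have hA' : A = ∑ k ∈ Finset.range n, pM * (H * pM) ^ k := hA
  obtain ⟨ea1, ea2, hX⟩ := bpl_ring_aux dM pM H A hdM' hpert' n hnil' hA'
  -- back to composition form
  have ea1c : A - (pM + A ∘ₗ (H ∘ₗ pM)) = 0 := by
    rw [sub_eq_zero]
    simpa only [Module.End.mul_eq_comp, LinearMap.comp_assoc] using ea1
  have ea2c : A - (pM + pM ∘ₗ (H ∘ₗ A)) = 0 := by
    rw [sub_eq_zero]
    simpa only [Module.End.mul_eq_comp, LinearMap.comp_assoc] using ea2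
  have hXc : dM ∘ₗ A + A ∘ₗ dM + A ∘ₗ A + A ∘ₗ (dM ∘ₗ H) ∘ₗ A
      + A ∘ₗ (H ∘ₗ dM) ∘ₗ A = 0 := by
    simpa only [Module.End.mul_eq_comp, LinearMap.comp_assoc] using hX
  have z1 : dN ∘ₗ F - F ∘ₗ dM = 0 := by rw [sub_eq_zero, hF]
  have z2 : G ∘ₗ dN - dM ∘ₗ G = 0 := by rw [sub_eq_zero, hG]
  have z3 : G ∘ₗ F - (LinearMap.id + (dM ∘ₗ H + H ∘ₗ dM)) = 0 := by
    rw [sub_eq_zero, ← hH]; abel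
  constructor
  · rw [← sub_eq_zero]
    have cert : (F + F ∘ₗ A ∘ₗ H) ∘ₗ (dM + pM)
        - (dN + F ∘ₗ A ∘ₗ G) ∘ₗ (F + F ∘ₗ A ∘ₗ H)
        = -((dN ∘ₗ F - F ∘ₗ dM) ∘ₗ (LinearMap.id + A ∘ₗ H)
          + (F ∘ₗ A) ∘ₗ (G ∘ₗ F - (LinearMap.id + (dM ∘ₗ H + H ∘ₗ dM)))
              ∘ₗ (LinearMap.id + A ∘ₗ H)
          + F ∘ₗ (dM ∘ₗ A + A ∘ₗ dM + A ∘ₗ A + A ∘ₗ (dM ∘ₗ H) ∘ₗ A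
              + A ∘ₗ (H ∘ₗ dM) ∘ₗ A) ∘ₗ H
          + F ∘ₗ (A - (pM + A ∘ₗ (H ∘ₗ pM)))) := by
      simp only [LinearMap.comp_add, LinearMap.add_comp, LinearMap.comp_sub,
        LinearMap.sub_comp, LinearMap.comp_assoc, LinearMap.comp_id, LinearMap.id_comp]
      abel
    rw [cert, z1, z3, hXc, ea1c]
    simp
  · rw [← sub_eq_zero]
    have cert : (G + H ∘ₗ A ∘ₗ G) ∘ₗ (dN + F ∘ₗ A ∘ₗ G)
        - (dM + pM) ∘ₗ (G + H ∘ₗ A ∘ₗ G)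
        = (LinearMap.id + H ∘ₗ A) ∘ₗ (G ∘ₗ dN - dM ∘ₗ G)
          + (LinearMap.id + H ∘ₗ A) ∘ₗ (G ∘ₗ F - (LinearMap.id + (dM ∘ₗ H + H ∘ₗ dM)))
              ∘ₗ (A ∘ₗ G)
          + H ∘ₗ (dM ∘ₗ A + A ∘ₗ dM + A ∘ₗ A + A ∘ₗ (dM ∘ₗ H) ∘ₗ A
              + A ∘ₗ (H ∘ₗ dM) ∘ₗ A) ∘ₗ G
          + (A - (pM + pM ∘ₗ (H ∘ₗ A))) ∘ₗ G := by
      simp only [LinearMap.comp_add, LinearMap.add_comp, LinearMap.comp_sub,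
        LinearMap.sub_comp, LinearMap.comp_assoc, LinearMap.comp_id, LinearMap.id_comp]
      abel
    rw [cert, z2, z3, hXc, ea2c]
    simp
end

section
/- Under SDR data with side conditions and a nilpotent perturbation, setting as above F̃ := F + FAH, G̃ := G + HAG, H̃ := H + HAH, d̃_M := d_M + ∂_M, one has G̃F̃ - 1_M = d̃_M H̃ + H̃ d̃_M and F̃G̃ = 1_N. -/
open Finset

private lemma ring_rec {R : Type*} [Ring R] (h p : R) (n : ℕ) (hnil : (h*p)^n = 0) :
    (∑ k ∈ range n, p * (h*p)^k) = p + p*h*(∑ k ∈ range n, p*(h*p)^k) ∧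
    (∑ k ∈ range n, p * (h*p)^k) = p + (∑ k ∈ range n, p*(h*p)^k)*h*p := by
  have key : ∑ k ∈ range n, p * (h*p)^(k+1) = (∑ k ∈ range n, p*(h*p)^k) - p := by
    have h1 := Finset.sum_range_succ (fun k => p*(h*p)^k) n
    have h2 := Finset.sum_range_succ' (fun k => p*(h*p)^k) n
    simp only [pow_zero, mul_one, hnil, mul_zero, add_zero] at h1 h2
    rw [h1] at h2
    rw [h2]; abel
  constructor
  · have : p*h*(∑ k ∈ range n, p*(h*p)^k) = ∑ k ∈ range n, p * (h*p)^(k+1) := by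
      rw [Finset.mul_sum]
      apply Finset.sum_congr rfl
      intro k _
      rw [pow_succ']
      noncomm_ring
    rw [this, key]; abel
  · have : (∑ k ∈ range n, p*(h*p)^k)*h*p = ∑ k ∈ range n, p * (h*p)^(k+1) := by
      rw [Finset.sum_mul, Finset.sum_mul]
      apply Finset.sum_congr rfl
      intro k _
      rw [pow_succ]
      noncomm_ring
    rw [this, key]; abel

private lemma ring_S {R : Type*} [Ring R] (d h p a : R)
    (hq : d*p + p*d + p*p = 0)
    (h1 : a = p + p*h*a) (h2 : a = p + a*h*p) :
    d*a + a*d + a*a + a*h*d*a + a*d*h*a = 0 := by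
  have hu : a - (p + p*h*a) = 0 := sub_eq_zero.mpr h1
  have hv : a - (p + a*h*p) = 0 := sub_eq_zero.mpr h2
  have e : d*a + a*d + a*a + a*h*d*a + a*d*h*a
      = (d*p + p*d + p*p)
        + (d*p + p*d + p*p)*(h*a) + (a*h)*(d*p + p*d + p*p)
        + (a*h)*(d*p + p*d + p*p)*(h*a)
        + d*(a - (p + p*h*a)) + (a - (p + a*h*p))*d
        + (a - (p + a*h*p))*a + p*(a - (p + p*h*a)) + a*h*p*(a - (p + p*h*a))
        + a*h*d*(a - (p + p*h*a)) + (a - (p + a*h*p))*d*h*a := by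
    noncomm_ring
  rw [e, hu, hv, hq]
  noncomm_ring

private lemma ring_main {R : Type*} [Ring R] (d h p a e : R)
    (hgf : e = 1 + (d*h + h*d))
    (hq : d*p + p*d + p*p = 0) (h1 : a = p + p*h*a) (h2 : a = p + a*h*p) :
    e + e*(a*h) + (h*a)*e + (h*a)*e*(a*h) - 1
      = (d+p)*(h + h*a*h) + (h + h*a*h)*(d+p) := by
  have hS := ring_S d h p a hq h1 h2
  have hu : a - (p + p*h*a) = 0 := sub_eq_zero.mpr h1
  have hv : a - (p + a*h*p) = 0 := sub_eq_zero.mpr h2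
  subst hgf
  have e2 : (1 + (d*h + h*d)) + (1 + (d*h + h*d))*(a*h) + (h*a)*(1 + (d*h + h*d))
        + (h*a)*(1 + (d*h + h*d))*(a*h) - 1
        - ((d+p)*(h + h*a*h) + (h + h*a*h)*(d+p))
      = h*(d*a + a*d + a*a + a*h*d*a + a*d*h*a)*h
        + (a - (p + p*h*a))*h + h*(a - (p + a*h*p)) := by
    noncomm_ring
  rw [hS, hu, hv] at e2
  simp only [mul_zero, zero_mul, zero_add, add_zero] at e2
  exact sub_eq_zero.mp e2



/-- **Basic Perturbation Lemma, part 3.** With `F̃ = F + F∘A∘H`,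
`G̃ = G + H∘A∘G`, `H̃ = H + H∘A∘H` and `d̃M = dM + pM`, one has
`G̃∘F̃ - 1 = d̃M∘H̃ + H̃∘d̃M` and `F̃∘G̃ = 1`. -/
theorem ideal_perturbation_stmt2
    {M N : Type*} [AddCommGroup M] [AddCommGroup N] [Module ℤ M] [Module ℤ N]
    (dM H pM A : M →ₗ[ℤ] M) (dN : N →ₗ[ℤ] N)
    (F : M →ₗ[ℤ] N) (G : N →ₗ[ℤ] M)
    (hdM : dM ∘ₗ dM = 0) (hdN : dN ∘ₗ dN = 0)
    (hF : F ∘ₗ dM = dN ∘ₗ F) (hG : G ∘ₗ dN = dM ∘ₗ G)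
    (hH : G ∘ₗ F - LinearMap.id = dM ∘ₗ H + H ∘ₗ dM)
    (hFG : F ∘ₗ G = LinearMap.id)
    (hHH : H ∘ₗ H = 0) (hHG : H ∘ₗ G = 0) (hFH : F ∘ₗ H = 0)
    (hpert : (dM + pM) ∘ₗ (dM + pM) = 0)
    (n : ℕ) (hnil : (H ∘ₗ pM) ^ n = 0)
    (hA : A = ∑ k ∈ Finset.range n, pM ∘ₗ (H ∘ₗ pM) ^ k) :
    (G + H ∘ₗ A ∘ₗ G) ∘ₗ (F + F ∘ₗ A ∘ₗ H) - LinearMap.id =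
      (dM + pM) ∘ₗ (H + H ∘ₗ A ∘ₗ H) + (H + H ∘ₗ A ∘ₗ H) ∘ₗ (dM + pM) ∧
    (F + F ∘ₗ A ∘ₗ H) ∘ₗ (G + H ∘ₗ A ∘ₗ G) = LinearMap.id := by
  -- convert hypotheses to End-ring language
  simp only [← Module.End.mul_eq_comp] at hA hnil hdM hpert hH
  obtain ⟨h1, h2⟩ := ring_rec H pM n hnil
  rw [← hA] at h1 h2
  have hq : dM*pM + pM*dM + pM*pM = 0 := by
    have e : dM*pM + pM*dM + pM*pM = (dM+pM)*(dM+pM) - dM*dM := by noncomm_ring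
    rw [e, hpert, hdM, sub_zero]
  have hgf : G ∘ₗ F = 1 + (dM*H + H*dM) := by
    have := sub_eq_iff_eq_add.mp hH
    rw [this]
    simp only [Module.End.one_eq_id]
    abel
  constructor
  · have hexp : (G + H ∘ₗ A ∘ₗ G) ∘ₗ (F + F ∘ₗ A ∘ₗ H)
        = (G ∘ₗ F) + (G ∘ₗ F)*(A*H) + (H*A)*(G ∘ₗ F) + (H*A)*(G ∘ₗ F)*(A*H) := by
      ext x
      simp [LinearMap.add_apply, LinearMap.comp_apply, Module.End.mul_apply]
      abel
    rw [hexp]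
    simp only [← Module.End.mul_eq_comp, ← Module.End.one_eq_id]
    exact ring_main dM H pM A (G ∘ₗ F) hgf hq h1 h2
  · have hg0 : ∀ y, H (G y) = 0 := fun y => by
      simpa using LinearMap.ext_iff.mp hHG y
    have hh0 : ∀ y, H (H y) = 0 := fun y => by
      have := LinearMap.ext_iff.mp hHH y
      simpa [Module.End.mul_apply] using this
    have hf0 : ∀ y, F (H y) = 0 := fun y => by
      simpa using LinearMap.ext_iff.mp hFH y
    have hfg : ∀ y, F (G y) = y := fun y => by
      simpa using LinearMap.ext_iff.mp hFG y
    ext y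
    simp [LinearMap.add_apply, LinearMap.comp_apply, map_add, hg0, hh0, hf0, hfg]
end

section
/- Under SDR data (F,G,H) with side conditions and nilpotent perturbation, the perturbed data (F̃, G̃, H̃) again satisfy the side conditions H̃H̃ = 0, H̃G̃ = 0, F̃H̃ = 0. -/
/-- **Basic Perturbation Lemma, part 4: side conditions.** The perturbed data
`F̃ = F + F∘A∘H`, `G̃ = G + H∘A∘G`, `H̃ = H + H∘A∘H` again satisfy the side
conditions `H̃∘H̃ = 0`, `H̃∘G̃ = 0`, `F̃∘H̃ = 0`. -/
theorem ideal_perturbation_stmt3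
    {M N : Type*} [AddCommGroup M] [AddCommGroup N] [Module ℤ M] [Module ℤ N]
    (dM H pM A : M →ₗ[ℤ] M) (dN : N →ₗ[ℤ] N)
    (F : M →ₗ[ℤ] N) (G : N →ₗ[ℤ] M)
    (hdM : dM ∘ₗ dM = 0) (hdN : dN ∘ₗ dN = 0)
    (hF : F ∘ₗ dM = dN ∘ₗ F) (hG : G ∘ₗ dN = dM ∘ₗ G)
    (hH : G ∘ₗ F - LinearMap.id = dM ∘ₗ H + H ∘ₗ dM)
    (hFG : F ∘ₗ G = LinearMap.id)
    (hHH : H ∘ₗ H = 0) (hHG : H ∘ₗ G = 0) (hFH : F ∘ₗ H = 0)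
    (hpert : (dM + pM) ∘ₗ (dM + pM) = 0)
    (n : ℕ) (hnil : (H ∘ₗ pM) ^ n = 0)
    (hA : A = ∑ k ∈ Finset.range n, pM ∘ₗ (H ∘ₗ pM) ^ k) :
    (H + H ∘ₗ A ∘ₗ H) ∘ₗ (H + H ∘ₗ A ∘ₗ H) = 0 ∧
    (H + H ∘ₗ A ∘ₗ H) ∘ₗ (G + H ∘ₗ A ∘ₗ G) = 0 ∧
    (F + F ∘ₗ A ∘ₗ H) ∘ₗ (H + H ∘ₗ A ∘ₗ H) = 0 := by
  have hHH' : ∀ x, H (H x) = 0 := fun x => by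
    simpa using DFunLike.congr_fun hHH x
  have hHG' : ∀ x, H (G x) = 0 := fun x => by
    simpa using DFunLike.congr_fun hHG x
  have hFH' : ∀ x, F (H x) = 0 := fun x => by
    simpa using DFunLike.congr_fun hFH x
  refine ⟨?_, ?_, ?_⟩ <;> ext x <;>
    simp [LinearMap.comp_apply, hHH', hHG', hFH']
end

section
/- Since F is a homotopy equivalence, left-multiplication by the homotopy class of F induces an isomorphism on homology of Hom-complexes; consequently [o_M] = 0 in H_1(Hom(M,N)) if and only if [o_N] = 0 in H_1(Hom(N,M)), where o_M = FH - LF, o_N = GL - HG. -/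
/-- One direction: if `o_M = FH - LF` is a boundary then `o_N = GL - HG` is a
boundary, witnessed by `ψ = H∘H∘G + (G∘L - H∘G)∘L - G∘θ∘G`. -/
theorem aux_obstruction_dir
    {M N : Type*} [AddCommGroup M] [AddCommGroup N] [Module ℤ M] [Module ℤ N]
    (dM H : M →ₗ[ℤ] M) (dN L : N →ₗ[ℤ] N)
    (F : M →ₗ[ℤ] N) (G : N →ₗ[ℤ] M)
    (hF : F ∘ₗ dM = dN ∘ₗ F) (hG : G ∘ₗ dN = dM ∘ₗ G)
    (hH : G ∘ₗ F - LinearMap.id = dM ∘ₗ H + H ∘ₗ dM)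
    (hL : F ∘ₗ G - LinearMap.id = dN ∘ₗ L + L ∘ₗ dN) :
    (∃ θ : M →ₗ[ℤ] N, F ∘ₗ H - L ∘ₗ F = dN ∘ₗ θ - θ ∘ₗ dM) →
    (∃ ψ : N →ₗ[ℤ] M, G ∘ₗ L - H ∘ₗ G = dM ∘ₗ ψ - ψ ∘ₗ dN) := by
  rintro ⟨θ, hθ⟩
  refine ⟨H ∘ₗ (H ∘ₗ G) + (G ∘ₗ L - H ∘ₗ G) ∘ₗ L - G ∘ₗ (θ ∘ₗ G), ?_⟩
  ext x
  have hGx : ∀ y, G (dN y) = dM (G y) := fun y => LinearMap.congr_fun hG y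
  have hHx : ∀ y, G (F y) - y = dM (H y) + H (dM y) := fun y => LinearMap.congr_fun hH y
  have hLx : ∀ y, F (G y) - y = dN (L y) + L (dN y) := fun y => LinearMap.congr_fun hL y
  have hθx : ∀ y, F (H y) - L (F y) = dN (θ y) - θ (dM y) := fun y => LinearMap.congr_fun hθ y
  have e1 := hGx (L (L x))
  have e2 := congrArg (⇑G) (hθx (G x))
  have e3 := hGx (θ (G x))
  have e4 := congrArg (fun y => G (θ y)) (hGx x)
  have e5 := congrArg (fun y => H (H y)) (hGx x)
  have e6 := hHx (H (G x))
  have e7 := congrArg (⇑H) (hHx (G x))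
  have e8 := congrArg (⇑G) (hLx (L x))
  have e9 := congrArg (fun y => G (L y)) (hLx x)
  have e10 := hHx (G (L x))
  have e11 := congrArg (⇑H) (hGx (L x))
  have e12 := congrArg (fun y => H (G y)) (hLx x)
  simp only [map_add, map_sub] at e2 e4 e5 e7 e8 e9 e11 e12
  simp only [LinearMap.comp_apply, LinearMap.add_apply, LinearMap.sub_apply, map_add, map_sub]
  linear_combination (norm := module) e1 - e2 - e3 - e4 + e5 + e6 - e7 + e8 - e9 - e10 + e11 + e12

/-- `[o_M] = 0` in `H_1(Hom(M,N))` if and only if `[o_N] = 0` in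
`H_1(Hom(N,M))`: the obstruction cycle `o_M = FH - LF` is a boundary
(`= dN∘θ - θ∘dM` for a degree-2 `θ`) iff `o_N = GL - HG` is a boundary. -/
theorem ideal_perturbation_stmt6
    {M N : Type*} [AddCommGroup M] [AddCommGroup N] [Module ℤ M] [Module ℤ N]
    (dM H : M →ₗ[ℤ] M) (dN L : N →ₗ[ℤ] N)
    (F : M →ₗ[ℤ] N) (G : N →ₗ[ℤ] M)
    (hdM : dM ∘ₗ dM = 0) (hdN : dN ∘ₗ dN = 0)
    (hF : F ∘ₗ dM = dN ∘ₗ F) (hG : G ∘ₗ dN = dM ∘ₗ G)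
    (hH : G ∘ₗ F - LinearMap.id = dM ∘ₗ H + H ∘ₗ dM)
    (hL : F ∘ₗ G - LinearMap.id = dN ∘ₗ L + L ∘ₗ dN) :
    (∃ θ : M →ₗ[ℤ] N, F ∘ₗ H - L ∘ₗ F = dN ∘ₗ θ - θ ∘ₗ dM) ↔
    (∃ ψ : N →ₗ[ℤ] M, G ∘ₗ L - H ∘ₗ G = dM ∘ₗ ψ - ψ ∘ₗ dN) := by
  exact ⟨aux_obstruction_dir dM H dN L F G hF hG hH hL,
         aux_obstruction_dir dN L dM H G F hG hF hL hH⟩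
end

section
/- Given a chain homotopy equivalence (F, G, H, L) with H' := H - G(FH - LF), the second obstruction GL - H'G is also a boundary: GL - H'G = GL - HG + G(FH - LF)G = D(H²G + GL² - HGL) in Hom(N,M). -/
/-- With `H' = H - G(FH - LF)`, the second obstruction is also a boundary:
`GL - H'G = GL - HG + G(FH - LF)G = D(H²G + GL² - HGL)` in `Hom(N,M)`. -/
theorem ideal_perturbation_stmt8
    {M N : Type*} [AddCommGroup M] [AddCommGroup N] [Module ℤ M] [Module ℤ N]
    (dM H : M →ₗ[ℤ] M) (dN L : N →ₗ[ℤ] N)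
    (F : M →ₗ[ℤ] N) (G : N →ₗ[ℤ] M)
    (hdM : dM ∘ₗ dM = 0) (hdN : dN ∘ₗ dN = 0)
    (hF : F ∘ₗ dM = dN ∘ₗ F) (hG : G ∘ₗ dN = dM ∘ₗ G)
    (hH : G ∘ₗ F - LinearMap.id = dM ∘ₗ H + H ∘ₗ dM)
    (hL : F ∘ₗ G - LinearMap.id = dN ∘ₗ L + L ∘ₗ dN) :
    G ∘ₗ L - (H - G ∘ₗ (F ∘ₗ H - L ∘ₗ F)) ∘ₗ G =
        G ∘ₗ L - H ∘ₗ G + G ∘ₗ ((F ∘ₗ H - L ∘ₗ F) ∘ₗ G) ∧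
    G ∘ₗ L - H ∘ₗ G + G ∘ₗ ((F ∘ₗ H - L ∘ₗ F) ∘ₗ G) =
      dM ∘ₗ (H ∘ₗ H ∘ₗ G + G ∘ₗ (L ∘ₗ L) - H ∘ₗ G ∘ₗ L) -
        (H ∘ₗ H ∘ₗ G + G ∘ₗ (L ∘ₗ L) - H ∘ₗ G ∘ₗ L) ∘ₗ dN := by
  have pH : ∀ y, G (F y) - y = dM (H y) + H (dM y) := fun y => by
    simpa using LinearMap.congr_fun hH y
  have pL : ∀ y, F (G y) - y = dN (L y) + L (dN y) := fun y => by
    simpa using LinearMap.congr_fun hL y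
  have pG : ∀ y, G (dN y) = dM (G y) := fun y => by
    simpa using LinearMap.congr_fun hG y
  constructor
  · ext x
    simp only [LinearMap.comp_apply, LinearMap.sub_apply, LinearMap.add_apply, map_sub, map_add]
    abel
  · ext x
    simp only [LinearMap.comp_apply, LinearMap.sub_apply, LinearMap.add_apply, map_sub, map_add]
    -- pointwise equations
    have e1 := pH (H (G x))
    have e2 := congrArg H (pH (G x))
    have e3 := congrArg H (congrArg H (pG x))
    have e4 := pG (L (L x))
    have e5 := congrArg G (pL (L x))
    have e6 := congrArg G (congrArg L (pL x))
    have e7 := pH (G (L x))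
    have e8 := congrArg H (pG (L x))
    have e9 := congrArg H (congrArg G (pL x))
    simp only [map_sub, map_add] at e1 e2 e3 e4 e5 e6 e7 e8 e9
    linear_combination (norm := module) e1 - e2 + e3 + e4 + e5 - e6 - e7 + e8 + e9
end

section
/- The free graded algebra Z[x̄] on a single generator x̄ of degree -1, equipped with the derivation differential d(x̄) = -x̄·x̄, satisfies d² = 0 and is acyclic in the sense that its homology is Z concentrated in degree 0 (the class of 1), i.e. every cycle of nonzero degree is a boundary. -/
/-!
On monomials `d x̄^(2k+1) = -x̄^(2k+2)` and `d x̄^(2k) = 0`, so `d` pairs each odd monomial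
with the next even one. Hence a cycle `c x̄^n` of negative degree is either even, and then a
boundary, or odd, and then `c = 0`; the constant term of any boundary vanishes, so `1` is not one.
-/

open PowerSeries

/-- The differential on `ℤ[[x̄]]`, where the generator `x̄` has degree `-1`,
determined by `d(x̄) = -x̄·x̄` and the graded Leibniz rule; on monomials,
`d(x̄^m) = -x̄^{m+1}` for `m` odd and `d(x̄^m) = 0` for `m` even. In terms of
coefficients: the `n`-th coefficient of `d f` is `-(coeff (n-1) f)` when `n` is
even and nonzero, and `0` otherwise. -/
noncomputable def difDifferential (f : PowerSeries ℤ) : PowerSeries ℤ :=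
  PowerSeries.mk fun n => if Even n ∧ n ≠ 0 then -(PowerSeries.coeff (n - 1) f) else 0

lemma coeff_difDifferential (f : PowerSeries ℤ) (n : ℕ) :
    coeff n (difDifferential f) = if Even n ∧ n ≠ 0 then -coeff (n - 1) f else 0 :=
  coeff_mk _ _

lemma coeff_zero_difDifferential (f : PowerSeries ℤ) :
    coeff 0 (difDifferential f) = 0 := by
  simp [coeff_difDifferential]

lemma difDifferential_zsmul (c : ℤ) (f : PowerSeries ℤ) :
    difDifferential (c • f) = c • difDifferential f := by
  ext n
  simp only [coeff_difDifferential, map_zsmul, smul_eq_mul]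
  split_ifs <;> ring

lemma difDifferential_difDifferential (f : PowerSeries ℤ) :
    difDifferential (difDifferential f) = 0 := by
  ext n
  rw [coeff_difDifferential, map_zero]
  split_ifs with hn
  · obtain ⟨hn_even, hn_pos⟩ := hn
    have hodd : ¬ Even (n - 1) := by
      rw [Nat.even_sub (Nat.one_le_iff_ne_zero.mpr hn_pos)]
      simp [hn_even]
    rw [coeff_difDifferential, if_neg (fun h => hodd h.1), neg_zero]
  · rfl

lemma difDifferential_X_pow_of_odd {m : ℕ} (hm : Odd m) :
    difDifferential (X ^ m) = -X ^ (m + 1) := by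
  ext n
  rw [coeff_difDifferential, map_neg, coeff_X_pow, coeff_X_pow]
  by_cases hn : n = m + 1
  · subst hn
    simp [hm.add_one]
  · have : n - 1 ≠ m := by have := hm.pos; omega
    simp [hn, this]

lemma difDifferential_X_pow_of_even {m : ℕ} (hm : Even m) :
    difDifferential (X ^ m) = 0 := by
  ext n
  rw [coeff_difDifferential, map_zero, coeff_X_pow]
  split_ifs with hn hnm <;> try rfl
  obtain ⟨hn_even, hn_pos⟩ := hn
  rw [← hnm, Nat.even_sub (Nat.one_le_iff_ne_zero.mpr hn_pos)] at hm
  simp [hn_even] at hm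

lemma eq_zero_of_difDifferential_zsmul_X_pow_of_odd {m : ℕ} (hm : Odd m) {c : ℤ}
    (hc : difDifferential (c • X ^ m) = 0) : c = 0 := by
  rw [difDifferential_zsmul, difDifferential_X_pow_of_odd hm] at hc
  simpa only [map_neg, map_zsmul, coeff_X_pow_self, smul_eq_mul, mul_neg, mul_one, neg_eq_zero,
    map_zero] using congrArg (coeff (m + 1)) hc

lemma exists_difDifferential_eq_zsmul_X_pow_of_even {n : ℕ} (hn : Even n) (hn_pos : n ≠ 0)
    (c : ℤ) : ∃ g, difDifferential g = c • X ^ n := by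
  obtain ⟨m, rfl⟩ := Nat.exists_eq_add_one.mpr (Nat.pos_of_ne_zero hn_pos)
  have hm : Odd m := by simpa [Nat.even_add_one] using hn
  exact ⟨(-c) • X ^ m, by rw [difDifferential_zsmul, difDifferential_X_pow_of_odd hm]; simp⟩

/-- **Acyclicity of the operad `Dif` (Proposition 3.2 of Markl).** The complex
`(ℤ[[x̄]], d)` with `deg x̄ = -1`, `d x̄ = -x̄²` satisfies `d² = 0`, every cycle
of negative degree (i.e. every cycle `c • x̄^n`, `n ≥ 1`) is a boundary, every
degree-0 element `c • 1` is a cycle, and `c • 1` is a boundary only for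
`c = 0`; hence `H_* ≅ ℤ`, concentrated in degree `0`. -/
theorem ideal_perturbation_stmt16 :
    (∀ f : PowerSeries ℤ, difDifferential (difDifferential f) = 0) ∧
    (∀ n : ℕ, 1 ≤ n → ∀ c : ℤ,
      difDifferential (c • (PowerSeries.X : PowerSeries ℤ) ^ n) = 0 →
      ∃ g : PowerSeries ℤ, difDifferential g = c • (PowerSeries.X : PowerSeries ℤ) ^ n) ∧
    (∀ c : ℤ, difDifferential (c • (1 : PowerSeries ℤ)) = 0) ∧
    (∀ c : ℤ, ∀ f : PowerSeries ℤ,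
      difDifferential f = c • (1 : PowerSeries ℤ) → c = 0) := by
  refine ⟨difDifferential_difDifferential, ?_, ?_, ?_⟩
  · intro n hn c hc
    rcases Nat.even_or_odd n with hn_even | hn_odd
    · exact exists_difDifferential_eq_zsmul_X_pow_of_even hn_even (by omega) c
    · obtain rfl := eq_zero_of_difDifferential_zsmul_X_pow_of_odd hn_odd hc
      exact ⟨0, by simpa using hc⟩
  · intro c
    rw [difDifferential_zsmul, ← pow_zero X, difDifferential_X_pow_of_even Even.zero, smul_zero]
  · intro c f hf
    simpa [coeff_zero_difDifferential] using (congrArg (coeff 0) hf).symm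
end
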